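/- arXiv:2510.26324 — 5 statements merged into one kernel-verified Lean document; each statement's English description precedes it below -/
import Mathlib

section
/- Let α, R > 0 and let g : B(0,R) → ℝ be continuously differentiable with gradient s = ∇g satisfying ⟨s(y) − s(x), x − y⟩ ≥ α‖x − y‖² for all x, y ∈ B(0,R) (the closed Euclidean ball of radius R centered at 0 in ℝ^d). For each z ∈ B(0,R) define φ_z(x) = g(z) + ⟨s(z), x − z⟩ − (α/2)‖x − z‖² for x ∈ ℝ^d, and define g̃(x) = g(x) when ‖x‖ ≤ R and g̃(x) = inf_{z ∈ B(0,R)} φ_z(x) when ‖x‖ > R. Then g̃ is globally α-strongly concave on ℝ^d: the function x ↦ g̃(x) + (α/2)‖x‖² is concave on ℝ^d. -/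
/-!
Each tangent paraboloid `φ_z` is `α`-strongly concave, since `φ_z + (α/2)‖·‖²` is affine, and an
infimum of `α`-strongly concave functions is again `α`-strongly concave. It therefore suffices to
see that `g̃` is the infimum of the `φ_z` on all of `ℝ^d`. Outside the ball this is the definition;
inside, `φ_x(x) = g(x)` and `g ≤ φ_z` on the ball, because along the segment from `z` to `x` the
strong monotonicity of `-s` makes `t ↦ g(z + t(x - z)) - t⟪s z, x - z⟫ + (α/2)t²‖x - z‖²`
nonincreasing. Continuity of `g` and `s` on the compact ball keeps all infima bounded below.
-/

open Metric Set
open scoped RealInnerProductSpace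

section UniformConcave

variable {E ι : Type*} [NormedAddCommGroup E] [NormedSpace ℝ E] [Nonempty ι] {K : Set E}
  {φ : ℝ → ℝ} {f : ι → E → ℝ}

lemma UniformConcaveOn.ciInf (hf : ∀ i, UniformConcaveOn K φ (f i))
    (hbdd : ∀ x ∈ K, BddBelow (range fun i => f i x)) :
    UniformConcaveOn K φ fun x => ⨅ i, f i x := by
  refine ⟨(hf (Classical.arbitrary ι)).1, fun x hx y hy a b ha hb hab => le_ciInf fun i => ?_⟩
  calc a • (⨅ i, f i x) + b • (⨅ i, f i y) + a * b * φ ‖x - y‖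
      ≤ a • f i x + b • f i y + a * b * φ ‖x - y‖ := by
        gcongr
        exacts [ciInf_le (hbdd x hx) i, ciInf_le (hbdd y hy) i]
    _ ≤ f i (a • x + b • y) := (hf i).2 hx hy ha hb hab

end UniformConcave

section TangentParaboloid

variable {E : Type*} [NormedAddCommGroup E] [InnerProductSpace ℝ E]
  {g : E → ℝ} {s : E → E} {α : ℝ} {K : Set E} {x z : E}

/-- The paper's `φ_z`: the tangent plane of `g` at `z` bent down with curvature `α`. -/
noncomputable def tangentParaboloid (g : E → ℝ) (s : E → E) (α : ℝ) (z x : E) : ℝ :=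
  g z + ⟪s z, x - z⟫ - α / 2 * ‖x - z‖ ^ 2

@[simp]
lemma tangentParaboloid_self : tangentParaboloid g s α x x = g x := by
  simp [tangentParaboloid]

lemma tangentParaboloid_add_half_mul_norm_sq (z x : E) :
    tangentParaboloid g s α z x + α / 2 * ‖x‖ ^ 2 =
      (g z - ⟪s z, z⟫ - α / 2 * ‖z‖ ^ 2) + ⟪s z + α • z, x⟫ := by
  rw [tangentParaboloid, inner_sub_right, norm_sub_sq_real, inner_add_left, real_inner_smul_left,
    real_inner_comm x z]
  ring

lemma strongConcaveOn_tangentParaboloid (z : E) :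
    StrongConcaveOn univ α (tangentParaboloid g s α z) := by
  rw [strongConcaveOn_iff_convex]
  simp_rw [tangentParaboloid_add_half_mul_norm_sq z]
  exact (concaveOn_const _ convex_univ).add ((innerₗ E _).concaveOn convex_univ)

lemma ContinuousOn.tangentParaboloid (hg : ContinuousOn g K) (hs : ContinuousOn s K) (x : E) :
    ContinuousOn (fun z => tangentParaboloid g s α z x) K := by
  unfold _root_.tangentParaboloid
  fun_prop

section Gradient

variable [CompleteSpace E]

lemma HasGradientWithinAt.hasDerivWithinAt_comp_add_smul {g' u : E} {D : Set ℝ} {t : ℝ}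
    (hg : HasGradientWithinAt g g' K (z + t • u)) (hD : MapsTo (fun τ => z + τ • u) D K) :
    HasDerivWithinAt (fun τ => g (z + τ • u)) ⟪g', u⟫ D t := by
  have hpath : HasDerivAt (fun τ : ℝ => z + τ • u) u t := by
    simpa using ((hasDerivAt_id t).smul_const u).const_add z
  exact hg.hasFDerivWithinAt.comp_hasDerivWithinAt t hpath.hasDerivWithinAt hD

lemma Convex.le_tangentParaboloid (hK : Convex ℝ K)
    (hg : ∀ y ∈ K, HasGradientWithinAt g (s y) K y)
    (hmono : ∀ x ∈ K, ∀ y ∈ K, α * ‖x - y‖ ^ 2 ≤ ⟪s y - s x, x - y⟫)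
    (hx : x ∈ K) (hz : z ∈ K) : g x ≤ tangentParaboloid g s α z x := by
  set u := x - z
  have hseg : MapsTo (fun t : ℝ => z + t • u) (Icc 0 1) K := fun t ht =>
    hK.add_smul_sub_mem hz hx ht
  set q : ℝ → ℝ := fun t => g (z + t • u) - t * ⟪s z, u⟫ + α / 2 * t ^ 2 * ‖u‖ ^ 2
  set q' : ℝ → ℝ := fun t => ⟪s (z + t • u), u⟫ - ⟪s z, u⟫ + α * t * ‖u‖ ^ 2
  have hq : ∀ t ∈ Icc (0 : ℝ) 1, HasDerivWithinAt q (q' t) (Icc 0 1) t := fun t ht => by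
    have := (((hg _ (hseg ht)).hasDerivWithinAt_comp_add_smul hseg).sub
      (((hasDerivAt_id t).mul_const ⟪s z, u⟫).hasDerivWithinAt)).add
      ((((hasDerivAt_pow 2 t).const_mul (α / 2)).mul_const (‖u‖ ^ 2)).hasDerivWithinAt)
    exact this.congr_deriv (by simp only [q']; ring)
  have hq'_nonpos : ∀ t ∈ interior (Icc (0 : ℝ) 1), q' t ≤ 0 := fun t ht => by
    rw [interior_Icc] at ht
    have hm := hmono _ (hseg (Ioo_subset_Icc_self ht)) z hz
    rw [add_sub_cancel_left, norm_smul, Real.norm_of_nonneg ht.1.le, real_inner_smul_right,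
      inner_sub_left] at hm
    have : t * (α * t * ‖u‖ ^ 2) ≤ t * (⟪s z, u⟫ - ⟪s (z + t • u), u⟫) := by linarith
    simp only [q']
    linarith [le_of_mul_le_mul_left this ht.1]
  have hq_anti : AntitoneOn q (Icc 0 1) :=
    antitoneOn_of_hasDerivWithinAt_nonpos (convex_Icc 0 1)
      (fun t ht => (hq t ht).continuousWithinAt)
      (fun t ht => (hq t (interior_subset ht)).mono interior_subset) hq'_nonpos
  have := hq_anti (left_mem_Icc.2 zero_le_one) (right_mem_Icc.2 zero_le_one) zero_le_one
  simp only [q, u, one_smul, add_sub_cancel, zero_smul, add_zero] at this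
  rw [tangentParaboloid]
  linarith

lemma Convex.ciInf_tangentParaboloid_eq (hK : Convex ℝ K)
    (hg : ∀ y ∈ K, HasGradientWithinAt g (s y) K y)
    (hmono : ∀ x ∈ K, ∀ y ∈ K, α * ‖x - y‖ ^ 2 ≤ ⟪s y - s x, x - y⟫)
    (hbdd : BddBelow (range fun z : K => tangentParaboloid g s α z x)) (hx : x ∈ K) :
    ⨅ z : K, tangentParaboloid g s α z x = g x :=
  have : Nonempty K := ⟨⟨x, hx⟩⟩
  le_antisymm ((ciInf_le hbdd ⟨x, hx⟩).trans_eq tangentParaboloid_self)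
    (le_ciInf fun z => hK.le_tangentParaboloid hg hmono hx z.2)

end Gradient

end TangentParaboloid

theorem strongly_concave_extension_general (d : ℕ) (α R : ℝ) (hR : 0 < R)
    (g : EuclideanSpace ℝ (Fin d) → ℝ)
    (s : EuclideanSpace ℝ (Fin d) → EuclideanSpace ℝ (Fin d))
    (hgrad : ∀ x ∈ closedBall (0 : EuclideanSpace ℝ (Fin d)) R,
      HasGradientWithinAt g (s x) (closedBall (0 : EuclideanSpace ℝ (Fin d)) R) x)
    (hs : ContinuousOn s (closedBall (0 : EuclideanSpace ℝ (Fin d)) R))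
    (hmono : ∀ x ∈ closedBall (0 : EuclideanSpace ℝ (Fin d)) R,
      ∀ y ∈ closedBall (0 : EuclideanSpace ℝ (Fin d)) R,
        α * ‖x - y‖ ^ 2 ≤ (inner ℝ (s y - s x) (x - y) : ℝ))
    (gt : EuclideanSpace ℝ (Fin d) → ℝ)
    (hgt : ∀ x, gt x =
      if ‖x‖ ≤ R then g x
      else ⨅ z : closedBall (0 : EuclideanSpace ℝ (Fin d)) R,
        (g ↑z + (inner ℝ (s ↑z) (x - ↑z) : ℝ) - α / 2 * ‖x - ↑z‖ ^ 2)) :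
    ConcaveOn ℝ Set.univ fun x => gt x + α / 2 * ‖x‖ ^ 2 := by
  set K := closedBall (0 : EuclideanSpace ℝ (Fin d)) R
  have hgc : ContinuousOn g K := fun x hx => (hgrad x hx).hasFDerivWithinAt.continuousWithinAt
  have : Nonempty K := ⟨⟨0, mem_closedBall_self hR.le⟩⟩
  have hbdd (x) : BddBelow (range fun z : K => tangentParaboloid g s α z x) := by
    simpa only [image_eq_range] using
      (isCompact_closedBall _ R).bddBelow_image (hgc.tangentParaboloid hs x)
  have hgt_eq : gt = fun x => ⨅ z : K, tangentParaboloid g s α z x := by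
    funext x
    rw [hgt x]
    split_ifs with hx
    · exact ((convex_closedBall 0 R).ciInf_tangentParaboloid_eq hgrad hmono (hbdd x)
        (mem_closedBall_zero_iff.2 hx)).symm
    · rfl
  rw [← strongConcaveOn_iff_convex, hgt_eq]
  exact UniformConcaveOn.ciInf (fun z : K => strongConcaveOn_tangentParaboloid z.1) fun x _ => hbdd x

/-- Let `g` be continuously differentiable on `B(0,R)` with gradient `s`
satisfying `⟨s(y) − s(x), x − y⟩ ≥ α‖x − y‖²` on the ball. Extend `g` outside the ball by
`g̃(x) = inf_{z ∈ B(0,R)} [g(z) + ⟨s(z), x − z⟩ − (α/2)‖x − z‖²]`. Then `g̃` is globally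
`α`-strongly concave: `x ↦ g̃(x) + (α/2)‖x‖²` is concave on `ℝ^d`. -/
theorem strongly_concave_extension (d : ℕ) (α R : ℝ) (hα : 0 < α) (hR : 0 < R)
    (g : EuclideanSpace ℝ (Fin d) → ℝ)
    (s : EuclideanSpace ℝ (Fin d) → EuclideanSpace ℝ (Fin d))
    (hgrad : ∀ x ∈ closedBall (0 : EuclideanSpace ℝ (Fin d)) R,
      HasGradientWithinAt g (s x) (closedBall (0 : EuclideanSpace ℝ (Fin d)) R) x)
    (hs : ContinuousOn s (closedBall (0 : EuclideanSpace ℝ (Fin d)) R))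
    (hmono : ∀ x ∈ closedBall (0 : EuclideanSpace ℝ (Fin d)) R,
      ∀ y ∈ closedBall (0 : EuclideanSpace ℝ (Fin d)) R,
        α * ‖x - y‖ ^ 2 ≤ (inner ℝ (s y - s x) (x - y) : ℝ))
    (gt : EuclideanSpace ℝ (Fin d) → ℝ)
    (hgt : ∀ x, gt x =
      if ‖x‖ ≤ R then g x
      else ⨅ z : closedBall (0 : EuclideanSpace ℝ (Fin d)) R,
        (g ↑z + (inner ℝ (s ↑z) (x - ↑z) : ℝ) - α / 2 * ‖x - ↑z‖ ^ 2)) :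
    ConcaveOn ℝ Set.univ fun x => gt x + α / 2 * ‖x‖ ^ 2 :=
  strongly_concave_extension_general d α R hR g s hgrad hs hmono gt hgt
end

section
/- Let a, x₀ > 0 and c > 0, and define the sequence (x_i) by x_{i+1} = (1 + min((a·x_i)^c, 1))·x_i. For B > 0 let k(B) be the minimum integer i with x_i ≥ B. Then there is a constant C > 0 depending only on c such that k(B) ≤ C·( (a·x₀)^{−c} + log(1 + B/x₀) ) for every B > 0. -/
/-!
While `a·xᵢ < 1` the step is `xᵢ₊₁ = (1 + (a·xᵢ)^c)·xᵢ`, and the potential `(a·xᵢ)^(-c)` then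
drops by at least `c/(c+2)`; being nonnegative, it allows at most `(c+2)/c · (a·x₀)^(-c)` such
steps. Afterwards the sequence doubles at every step, so `log₂(B/x₀) + 1 ≲ log(1 + B/x₀)`
further steps reach `B`.
-/

open Real

lemma one_add_mul_half_le_one_add_rpow {c y : ℝ} (hc : 0 ≤ c) (hy : 0 ≤ y) (hy1 : y ≤ 1) :
    1 + c * (y / 2) ≤ (1 + y) ^ c := by
  have hlog : y / 2 ≤ log (1 + y) :=
    calc y / 2 ≤ 2 * y / (y + 2) := by
          rw [le_div_iff₀ (by linarith)]; nlinarith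
      _ ≤ log (1 + y) := le_log_one_add_of_nonneg hy
  calc 1 + c * (y / 2) ≤ log (1 + y) * c + 1 := by nlinarith
    _ ≤ exp (log (1 + y) * c) := add_one_le_exp _
    _ = (1 + y) ^ c := (rpow_def_of_pos (by linarith) c).symm

lemma inv_mul_one_add_rpow_le {c y : ℝ} (hc : 0 < c) (hy : 0 < y) (hy1 : y ≤ 1) :
    (y * (1 + y) ^ c)⁻¹ ≤ y⁻¹ - c / (c + 2) := by
  have hbern := one_add_mul_half_le_one_add_rpow hc.le hy.le hy1
  calc (y * (1 + y) ^ c)⁻¹ ≤ (y * (1 + c * (y / 2)))⁻¹ :=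
        inv_anti₀ (by positivity) (mul_le_mul_of_nonneg_left hbern hy.le)
    _ = y⁻¹ - c / (2 + c * y) := by field_simp; ring
    _ ≤ y⁻¹ - c / (c + 2) :=
        sub_le_sub_left (div_le_div_of_nonneg_left hc.le (by positivity) (by nlinarith)) _

lemma rpow_neg_one_add_rpow_mul_le {c z : ℝ} (hc : 0 < c) (hz : 0 < z) (hz1 : z ≤ 1) :
    ((1 + z ^ c) * z) ^ (-c) ≤ z ^ (-c) - c / (c + 2) := by
  have hy : 0 < z ^ c := rpow_pos_of_pos hz c
  rw [rpow_neg (by positivity), rpow_neg hz.le, mul_rpow (by positivity) hz.le, mul_comm]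
  exact inv_mul_one_add_rpow_le hc hy (rpow_le_one hz.le hz1 hc.le)

lemma exists_mul_le_of_sub_le {u : ℕ → ℝ} {P : ℕ → Prop} {δ : ℝ} (hδ : 0 < δ)
    (hu : ∀ n, 0 ≤ u n) (hstep : ∀ n, ¬ P n → u (n + 1) ≤ u n - δ) :
    ∃ n, P n ∧ n * δ ≤ u 0 := by
  classical
  have hdrop : ∀ m, (∀ i < m, ¬ P i) → u m ≤ u 0 - m * δ := by
    intro m
    induction m with
    | zero => simp
    | succ m ih =>
      intro hm
      have hlast := hstep m (hm m m.lt_succ_self)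
      have hprev := ih fun i hi => hm i (hi.trans m.lt_succ_self)
      push_cast
      linarith
  have hP : ∃ n, P n := by
    by_contra! hnP
    obtain ⟨m, hm⟩ := exists_nat_gt (u 0 / δ)
    rw [div_lt_iff₀ hδ] at hm
    linarith [hdrop m fun i _ => hnP i, hu m]
  refine ⟨Nat.find hP, Nat.find_spec hP, ?_⟩
  linarith [hdrop _ fun i hi => Nat.find_min hP hi, hu (Nat.find hP)]

lemma exists_le_two_pow_mul_log_two_le {r : ℝ} (hr : 0 ≤ r) :
    ∃ j : ℕ, r ≤ 2 ^ j ∧ j * log 2 ≤ 2 * log (1 + r) := by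
  rcases lt_or_ge r 1 with hr1 | hr1
  · exact ⟨0, by simpa using hr1.le, by simpa using log_nonneg (by linarith)⟩
  obtain ⟨n, hn, hrn⟩ := exists_nat_pow_near hr1 one_lt_two
  refine ⟨n + 1, hrn.le, ?_⟩
  have hlog_pow : n * log 2 ≤ log (1 + r) := by
    rw [← log_pow]
    exact log_le_log (by positivity) (by linarith)
  have hlog_two : log 2 ≤ log (1 + r) := log_le_log two_pos (by linarith)
  push_cast
  linarith

section GrowthSequence

variable {a c : ℝ} {x : ℕ → ℝ}

lemma growth_pos (ha : 0 < a) (hx0 : 0 < x 0)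
    (hrec : ∀ i, x (i + 1) = (1 + min ((a * x i) ^ c) 1) * x i) (i : ℕ) : 0 < x i := by
  induction i with
  | zero => exact hx0
  | succ i ih =>
    rw [hrec]
    have : 0 < min ((a * x i) ^ c) 1 := lt_min (rpow_pos_of_pos (mul_pos ha ih) c) one_pos
    positivity

lemma growth_monotone (ha : 0 < a) (hx0 : 0 < x 0)
    (hrec : ∀ i, x (i + 1) = (1 + min ((a * x i) ^ c) 1) * x i) : Monotone x := by
  refine monotone_nat_of_le_succ fun i => ?_
  have hxi := growth_pos ha hx0 hrec i
  have : 0 ≤ min ((a * x i) ^ c) 1 := le_min (rpow_nonneg (mul_pos ha hxi).le c) zero_le_one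
  rw [hrec]
  nlinarith

lemma growth_rpow_neg_succ_le (hc : 0 < c) (ha : 0 < a) (hxi : 0 < x i)
    (hrec : ∀ i, x (i + 1) = (1 + min ((a * x i) ^ c) 1) * x i) (hi : a * x i ≤ 1) :
    (a * x (i + 1)) ^ (-c) ≤ (a * x i) ^ (-c) - c / (c + 2) := by
  have hz := mul_pos ha hxi
  have hstep : a * x (i + 1) = (1 + (a * x i) ^ c) * (a * x i) := by
    rw [hrec, min_eq_left (rpow_le_one hz.le hi hc.le)]
    ring
  rw [hstep]
  exact rpow_neg_one_add_rpow_mul_le hc hz hi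

lemma growth_add_eq_two_pow_mul (hc : 0 ≤ c)
    (hrec : ∀ i, x (i + 1) = (1 + min ((a * x i) ^ c) 1) * x i) (hn : 1 ≤ a * x n) (j : ℕ) :
    x (n + j) = 2 ^ j * x n := by
  induction j with
  | zero => simp
  | succ j ih =>
    have hj : 1 ≤ a * x (n + j) := by
      rw [ih, mul_left_comm]
      exact one_le_mul_of_one_le_of_one_le (one_le_pow₀ one_le_two) hn
    rw [← add_assoc, hrec, min_eq_right (one_le_rpow hj hc), ih]
    ring

lemma growth_exists_one_le_mul (hc : 0 < c) (ha : 0 < a) (hx0 : 0 < x 0)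
    (hrec : ∀ i, x (i + 1) = (1 + min ((a * x i) ^ c) 1) * x i) :
    ∃ n : ℕ, 1 ≤ a * x n ∧ n ≤ (c + 2) / c * (a * x 0) ^ (-c) := by
  have hpos := growth_pos ha hx0 hrec
  obtain ⟨n, hn, hnδ⟩ := exists_mul_le_of_sub_le (u := fun i => (a * x i) ^ (-c))
    (P := fun i => 1 ≤ a * x i) (by positivity : 0 < c / (c + 2))
    (fun i => rpow_nonneg (mul_pos ha (hpos i)).le _)
    (fun i hi => growth_rpow_neg_succ_le hc ha (hpos i) hrec (not_le.mp hi).le)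
  refine ⟨n, hn, ?_⟩
  rwa [mul_comm, ← mul_div_assoc, ← div_div_eq_mul_div, le_div_iff₀ (by positivity)]

end GrowthSequence

/-- For the sequence `x_{i+1} = (1 + min((a·x_i)^c, 1))·x_i` with
`a, x₀, c > 0`, the first index reaching level `B` is `O((a·x₀)^{−c} + log(1 + B/x₀))`,
with a constant depending only on `c`.  (Since the sequence is increasing, the bound on
the minimal index `k(B)` is expressed as: some index `k` with `x_k ≥ B` satisfies the
bound.) -/
theorem hitting_time_bound_geometric (c : ℝ) (hc : 0 < c) :
    ∃ C > (0 : ℝ), ∀ a x₀ : ℝ, 0 < a → 0 < x₀ →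
      ∀ x : ℕ → ℝ, x 0 = x₀ →
        (∀ i, x (i + 1) = (1 + min ((a * x i) ^ c) 1) * x i) →
        ∀ B > (0 : ℝ), ∃ k : ℕ, B ≤ x k ∧
          (k : ℝ) ≤ C * ((a * x₀) ^ (-c) + Real.log (1 + B / x₀)) := by
  have hlog2 : 0 < log 2 := log_pos one_lt_two
  refine ⟨(c + 2) / c + 2 / log 2, by positivity, ?_⟩
  rintro a _ ha hx₀ x rfl hrec B hB
  obtain ⟨n, hn, hn_le⟩ := growth_exists_one_le_mul hc ha hx₀ hrec
  obtain ⟨j, hBj, hj_le⟩ := exists_le_two_pow_mul_log_two_le (div_pos hB hx₀).le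
  refine ⟨n + j, ?_, ?_⟩
  · rw [growth_add_eq_two_pow_mul hc.le hrec hn]
    calc B ≤ 2 ^ j * x 0 := (div_le_iff₀ hx₀).mp hBj
      _ ≤ 2 ^ j * x n := by gcongr; exact growth_monotone ha hx₀ hrec n.zero_le
  · have hj : (j : ℝ) ≤ 2 / log 2 * log (1 + B / x 0) := by
      rw [div_mul_eq_mul_div, le_div_iff₀ hlog2]; exact hj_le
    have hu : 0 ≤ (a * x 0) ^ (-c) := rpow_nonneg (mul_pos ha hx₀).le _
    have hL : 0 ≤ log (1 + B / x 0) := log_nonneg (by linarith [div_pos hB hx₀])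
    push_cast
    linarith [mul_nonneg (by positivity : (0 : ℝ) ≤ (c + 2) / c) hL,
      mul_nonneg (by positivity : (0 : ℝ) ≤ 2 / log 2) hu]
end

section
/- Let x₀, a, b > 0 and define the sequence (x_i) inductively by x_{i+1} = (1 + γ_i)·x_i, where γ_i is the largest γ ∈ (0, 1] satisfying a·γ² + b·γ ≤ 2·x_i (taking γ_i = 1 if a + b ≤ 2x_i). For B > 0 let k(B) be the minimum integer i with x_i ≥ B. Then there is a universal constant C > 0 such that k(B) ≤ C·( b/x₀ + a/b + log(1 + B/x₀) ) for every B > 0. -/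
noncomputable def PhiQ (a b x : ℝ) : ℝ :=
  Real.log x / Real.log 2 - 2 * b / x - 8 * Real.sqrt a / Real.sqrt x

set_option maxHeartbeats 1000000 in
lemma phiQ_step (a b x γ : ℝ) (ha : 0 < a) (hb : 0 < b) (hx : 0 < x)
    (hγ1 : γ ≤ 1) (hγmin : min 1 (min (x / b) (Real.sqrt (x / a))) ≤ γ) :
    PhiQ a b x + 1 ≤ PhiQ a b ((1 + γ) * x) := by
  have hγ0 : 0 < γ := by
    refine lt_of_lt_of_le ?_ hγmin
    have h1 : (0:ℝ) < x / b := by positivity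
    have h2 : (0:ℝ) < Real.sqrt (x / a) := Real.sqrt_pos.2 (by positivity)
    exact lt_min_iff.2 ⟨one_pos, lt_min_iff.2 ⟨h1, h2⟩⟩
  have hlog2 : (0:ℝ) < Real.log 2 := Real.log_pos (by norm_num)
  set s := Real.sqrt (1 + γ) with hs_def
  have hs2 : s ^ 2 = 1 + γ := Real.sq_sqrt (by linarith)
  have hs0 : 0 < s := Real.sqrt_pos.2 (by linarith)
  have hs1 : 1 ≤ s := by nlinarith
  set sa := Real.sqrt a with hsa_def
  set sx := Real.sqrt x with hsx_def
  have hsa0 : 0 < sa := Real.sqrt_pos.2 ha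
  have hsx0 : 0 < sx := Real.sqrt_pos.2 hx
  have hsa2 : sa ^ 2 = a := Real.sq_sqrt ha.le
  have hsx2 : sx ^ 2 = x := Real.sq_sqrt hx.le
  clear_value s sa sx
  have hsqrt_mul : Real.sqrt ((1 + γ) * x) = s * sx := by
    rw [hs_def, hsx_def]; exact Real.sqrt_mul (by linarith) x
  have hlog_mul : Real.log ((1 + γ) * x) = Real.log (1 + γ) + Real.log x :=
    Real.log_mul (by linarith) hx.ne'
  -- three difference terms
  have hT1 : 0 ≤ Real.log (1 + γ) / Real.log 2 := by
    apply div_nonneg _ hlog2.le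
    exact Real.log_nonneg (by linarith)
  have hT2 : 0 ≤ 2 * b / x - 2 * b / ((1 + γ) * x) := by
    have : 2 * b / ((1 + γ) * x) ≤ 2 * b / x := by
      gcongr
      nlinarith [mul_nonneg hγ0.le hx.le]
    linarith
  have hT3 : 0 ≤ 8 * sa / sx - 8 * sa / (s * sx) := by
    have : 8 * sa / (s * sx) ≤ 8 * sa / sx := by
      gcongr
      nlinarith [mul_le_mul_of_nonneg_right hs1 hsx0.le]
    linarith
  have key : 1 ≤ Real.log (1 + γ) / Real.log 2 + (2 * b / x - 2 * b / ((1 + γ) * x))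
      + (8 * sa / sx - 8 * sa / (s * sx)) := by
    rcases min_le_iff.1 hγmin with h | h
    · -- γ = 1, log term gives 1
      have hγeq : γ = 1 := le_antisymm hγ1 h
      have : Real.log (1 + γ) / Real.log 2 = 1 := by
        rw [hγeq]; norm_num [div_self hlog2.ne']
      linarith
    rcases min_le_iff.1 h with h | h
    · -- x/b ≤ γ, middle term gives ≥ 1
      have hxb : x ≤ b * γ := by rwa [div_le_iff₀ hb, mul_comm] at h
      have h2 : 1 ≤ 2 * b / x - 2 * b / ((1 + γ) * x) := by
        rw [div_sub_div _ _ hx.ne' (by positivity : ((1 + γ) * x) ≠ 0),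
          le_div_iff₀ (by positivity)]
        nlinarith [mul_le_mul_of_nonneg_left hxb hx.le,
          mul_nonneg (mul_nonneg hx.le hx.le) (sub_nonneg.2 hγ1)]
      linarith
    · -- sqrt(x/a) ≤ γ, last term gives ≥ 2
      have hdiv : Real.sqrt (x / a) = sx / sa := by
        rw [hsx_def, hsa_def]; exact Real.sqrt_div hx.le a
      rw [hdiv, div_le_iff₀ hsa0] at h
      -- 1/s ≤ 1 - γ/4
      have h4 : 0 ≤ 4 - s - s ^ 2 := by nlinarith
      have hss : 1 / s ≤ 1 - γ / 4 := by
        rw [div_le_iff₀ hs0]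
        nlinarith [mul_nonneg (sub_nonneg.2 hs1) h4]
      have heq : 8 * sa / sx - 8 * sa / (s * sx) = (8 * sa / sx) * (1 - 1 / s) := by
        rw [mul_sub, mul_one, mul_one_div, div_div, mul_comm sx s]
      have h3 : 2 ≤ 8 * sa / sx - 8 * sa / (s * sx) := by
        rw [heq]
        have hge : (8 * sa / sx) * (γ / 4) ≤ (8 * sa / sx) * (1 - 1 / s) := by
          apply mul_le_mul_of_nonneg_left _ (by positivity)
          linarith
        have : 2 ≤ (8 * sa / sx) * (γ / 4) := by
          rw [div_mul_eq_mul_div, le_div_iff₀ hsx0]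
          nlinarith
        linarith
      linarith
  unfold PhiQ
  rw [hsqrt_mul, hlog_mul, add_div, ← hsa_def, ← hsx_def]
  have hrw : 2 * b / ((1 + γ) * x) = 2 * b / ((1 + γ) * x) := rfl
  linarith [key]

/-- For the sequence `x_{i+1} = (1 + γ_i)·x_i` where `γ_i` is the largest
`γ ∈ (0,1]` with `aγ² + bγ ≤ 2x_i`, the first index reaching level `B` is
`O(b/x₀ + a/b + log(1 + B/x₀))` with a universal constant. -/
theorem hitting_time_bound_quadratic :
    ∃ C > (0 : ℝ), ∀ x₀ a b : ℝ, 0 < x₀ → 0 < a → 0 < b →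
      ∀ (x : ℕ → ℝ) (γ : ℕ → ℝ), x 0 = x₀ →
        (∀ i, IsGreatest {g : ℝ | g ∈ Set.Ioc (0 : ℝ) 1 ∧ a * g ^ 2 + b * g ≤ 2 * x i} (γ i)) →
        (∀ i, x (i + 1) = (1 + γ i) * x i) →
        ∀ B > (0 : ℝ), ∃ k : ℕ, B ≤ x k ∧
          (k : ℝ) ≤ C * (b / x₀ + a / b + Real.log (1 + B / x₀)) := by
  refine ⟨10, by norm_num, ?_⟩
  intro x₀ a b hx₀ ha hb x γ hx0 hγ hrec B hB
  have hlog2 : (0:ℝ) < Real.log 2 := Real.log_pos (by norm_num)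
  have hγ0 : ∀ i, 0 < γ i := fun i => ((hγ i).1.1).1
  have hγ1 : ∀ i, γ i ≤ 1 := fun i => ((hγ i).1.1).2
  have hxpos : ∀ i, 0 < x i := by
    intro i
    induction i with
    | zero => rw [hx0]; exact hx₀
    | succ n ih => rw [hrec]; have := hγ0 n; nlinarith
  have hmin : ∀ i, min 1 (min (x i / b) (Real.sqrt (x i / a))) ≤ γ i := by
    intro i
    set g := min 1 (min (x i / b) (Real.sqrt (x i / a))) with hg_def
    have hg0 : 0 < g := by
      refine lt_min_iff.2 ⟨one_pos, lt_min_iff.2 ⟨div_pos (hxpos i) hb,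
        Real.sqrt_pos.2 (div_pos (hxpos i) ha)⟩⟩
    have hgb : g ≤ x i / b := le_trans (min_le_right _ _) (min_le_left _ _)
    have hgs : g ≤ Real.sqrt (x i / a) := le_trans (min_le_right _ _) (min_le_right _ _)
    refine (hγ i).2 ⟨⟨hg0, min_le_left _ _⟩, ?_⟩
    have h1 : b * g ≤ x i := by
      rw [le_div_iff₀ hb] at hgb; linarith [hgb]
    have h2 : a * g ^ 2 ≤ x i := by
      have : g ^ 2 ≤ x i / a := by
        calc g ^ 2 ≤ Real.sqrt (x i / a) ^ 2 := by nlinarith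
        _ = x i / a := Real.sq_sqrt (div_nonneg (hxpos i).le ha.le)
      calc a * g ^ 2 ≤ a * (x i / a) := by nlinarith
      _ = x i := by field_simp
    linarith
  have hstep : ∀ i, PhiQ a b (x i) + 1 ≤ PhiQ a b (x (i + 1)) := by
    intro i
    rw [hrec]
    exact phiQ_step a b (x i) (γ i) ha hb (hxpos i) (hγ1 i) (hmin i)
  have hPhi : ∀ k : ℕ, PhiQ a b x₀ + k ≤ PhiQ a b (x k) := by
    intro k
    induction k with
    | zero => simp [hx0]
    | succ n ih => push_cast; have := hstep n; push_cast at ih; linarith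
  have hPhile : ∀ y : ℝ, 0 < y → PhiQ a b y ≤ Real.log y / Real.log 2 := by
    intro y hy
    unfold PhiQ
    have h1 : (0:ℝ) ≤ 2 * b / y := by positivity
    have h2 : (0:ℝ) ≤ 8 * Real.sqrt a / Real.sqrt y := by positivity
    linarith
  -- existence of a hitting index
  have hex : ∃ k : ℕ, B ≤ x k := by
    obtain ⟨n, hn⟩ := exists_nat_ge (Real.log B / Real.log 2 - PhiQ a b x₀)
    refine ⟨n, ?_⟩
    have h1 : Real.log B / Real.log 2 ≤ PhiQ a b x₀ + n := by linarith
    have h2 : PhiQ a b (x n) ≤ Real.log (x n) / Real.log 2 := hPhile _ (hxpos n)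
    have h3 : Real.log B ≤ Real.log (x n) := by
      have := hPhi n
      have hd : Real.log B / Real.log 2 ≤ Real.log (x n) / Real.log 2 := by linarith
      exact (div_le_div_iff_of_pos_right hlog2).1 hd
    exact (Real.log_le_log_iff hB (hxpos n)).1 h3
  classical
  refine ⟨Nat.find hex, Nat.find_spec hex, ?_⟩
  have hRHSpos : 0 < b / x₀ + a / b + Real.log (1 + B / x₀) := by
    have h1 : (0:ℝ) < b / x₀ := by positivity
    have h2 : (0:ℝ) < a / b := by positivity
    have h3 : (0:ℝ) < Real.log (1 + B / x₀) := Real.log_pos (by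
      have : (0:ℝ) < B / x₀ := by positivity
      linarith)
    linarith
  rcases Nat.eq_zero_or_pos (Nat.find hex) with h0 | hposk
  · rw [h0]; push_cast; nlinarith
  -- k ≥ 1 : x₀ < B and x k < 2 B
  set k := Nat.find hex with hk_def
  have hxlt : x (k - 1) < B := by
    have := Nat.find_min hex (m := k - 1) (by omega)
    linarith [not_le.1 this]
  have hx0lt : x₀ < B := by
    have := Nat.find_min hex (m := 0) (by omega)
    rw [hx0] at this
    linarith [not_le.1 this]
  have hxk2B : x k < 2 * B := by
    have hks : k = (k - 1) + 1 := by omega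
    rw [hks, hrec]
    have h1 := hγ1 (k - 1)
    have h2 := hxpos (k - 1)
    nlinarith
  -- chain of bounds
  have hchain : (k : ℝ) ≤ Real.log (2 * B) / Real.log 2 - PhiQ a b x₀ := by
    have h1 := hPhi k
    have h2 : PhiQ a b (x k) ≤ Real.log (x k) / Real.log 2 := hPhile _ (hxpos k)
    have h3 : Real.log (x k) ≤ Real.log (2 * B) := Real.log_le_log (hxpos k) (by linarith)
    have h4 : Real.log (x k) / Real.log 2 ≤ Real.log (2 * B) / Real.log 2 := by
      gcongr
    linarith
  have hPhix₀ : PhiQ a b x₀ = Real.log x₀ / Real.log 2 - 2 * b / x₀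
      - 8 * Real.sqrt a / Real.sqrt x₀ := rfl
  -- log(2B) - log x₀ = log 2 + log (B / x₀)
  have hlogsplit : Real.log (2 * B) - Real.log x₀ = Real.log 2 + Real.log (B / x₀) := by
    rw [Real.log_mul (by norm_num) hB.ne', Real.log_div hB.ne' hx₀.ne']
    ring
  have hlogmono : Real.log (B / x₀) ≤ Real.log (1 + B / x₀) :=
    Real.log_le_log (by positivity) (by linarith)
  have hlog2le : Real.log 2 ≤ Real.log (1 + B / x₀) := by
    apply Real.log_le_log (by norm_num)
    have : 1 < B / x₀ := (one_lt_div hx₀).2 hx0lt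
    linarith
  set L := Real.log (1 + B / x₀) with hL_def
  have hLpos : 0 < L := Real.log_pos (by
    have hq : (0:ℝ) < B / x₀ := by positivity
    linarith)
  have hlogterm : (Real.log (2 * B) - Real.log x₀) / Real.log 2 ≤ 3 * L := by
    rw [hlogsplit]
    have h1 : Real.log 2 + Real.log (B / x₀) ≤ 2 * L := by linarith
    have h2 : (Real.log 2 + Real.log (B / x₀)) / Real.log 2 ≤ 2 * L / Real.log 2 := by
      gcongr
    have h3 : 2 * L / Real.log 2 ≤ 3 * L := by
      rw [div_le_iff₀ hlog2]
      nlinarith [Real.log_two_gt_d9, hLpos.le]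
    linarith
  -- sqrt AM-GM
  have hsqrtterm : 8 * Real.sqrt a / Real.sqrt x₀ ≤ 4 * (a / b) + 4 * (b / x₀) := by
    have hds : Real.sqrt a / Real.sqrt x₀ = Real.sqrt (a / x₀) := (Real.sqrt_div ha.le x₀).symm
    have hmulid : a / x₀ = (a / b) * (b / x₀) := by field_simp
    have hsle : Real.sqrt (a / x₀) ≤ (a / b + b / x₀) / 2 := by
      rw [show ((a / b + b / x₀) / 2 : ℝ) = Real.sqrt (((a / b + b / x₀) / 2) ^ 2) from
        (Real.sqrt_sq (by positivity)).symm]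
      apply Real.sqrt_le_sqrt
      rw [hmulid]
      nlinarith [sq_nonneg (a / b - b / x₀)]
    calc 8 * Real.sqrt a / Real.sqrt x₀ = 8 * (Real.sqrt a / Real.sqrt x₀) := by ring
    _ = 8 * Real.sqrt (a / x₀) := by rw [hds]
    _ ≤ 8 * ((a / b + b / x₀) / 2) := by linarith
    _ = 4 * (a / b) + 4 * (b / x₀) := by ring
  have hbb : 2 * b / x₀ = 2 * (b / x₀) := by ring
  have hfinal : (k : ℝ) ≤ 3 * L + 2 * (b / x₀) + 4 * (a / b) + 4 * (b / x₀) := by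
    have hd : Real.log (2 * B) / Real.log 2 - Real.log x₀ / Real.log 2
        = (Real.log (2 * B) - Real.log x₀) / Real.log 2 := by ring
    rw [hPhix₀] at hchain
    linarith [hchain, hlogterm, hsqrtterm, hbb]
  have hb1 : 0 < b / x₀ := by positivity
  have hb2 : 0 < a / b := by positivity
  calc (k : ℝ) ≤ 3 * L + 2 * (b / x₀) + 4 * (a / b) + 4 * (b / x₀) := hfinal
  _ ≤ 10 * (b / x₀ + a / b + L) := by linarith
end

section
/- Let S₁, S₂ be random variables taking values in a common measurable space, defined on a probability space together with random vectors Y' (representing y₁, …, y_{N−1}) and Y (representing y_N). Suppose that with probability at least 1 − δ over (Y', Y), TV( law of S₁ given (Y', Y), law of S₂ given (Y', Y) ) ≤ ε, for some ε, δ > 0. Then with probability at least 1 − δ/ε over Y, TV( law of S₁ given Y, law of S₂ given Y ) ≤ 2ε. -/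
/-!
Let `F` be the total variation distance between the conditional laws of `S₁` and `S₂` given
`(Y', Y)`. By the tower property, the conditional law given `Y` alone averages the one given
`(Y', Y)`, so the distance given `Y` is a.e. at most `E[F | Y]`; a countable generating algebra of
`γ` turns these set-by-set bounds into a bound on the supremum, and also makes `F` measurable.
Since `F ≤ 1` we have `E[F | Y] ≤ ε + P(F > ε | Y)`, and by Markov's inequality the event
`P(F > ε | Y) ≥ ε` has probability at most `P(F > ε) / ε ≤ δ / ε`.
-/

open MeasureTheory ProbabilityTheory

noncomputable def tvDist {α : Type*} [MeasurableSpace α] (μ ν : Measure α) : ℝ :=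
  ⨆ S : {S : Set α // MeasurableSet S}, |(μ S.1).toReal - (ν S.1).toReal|

open MeasurableSpace

theorem exists_countable_isSetAlgebra_generateFrom_eq (γ : Type*) [m : MeasurableSpace γ]
    [CountablyGenerated γ] :
    ∃ 𝒜 : Set (Set γ), 𝒜.Countable ∧ IsSetAlgebra 𝒜 ∧ generateFrom 𝒜 = m :=
  ⟨generateSetAlgebra (countableGeneratingSet γ),
    countable_generateSetAlgebra countable_countableGeneratingSet, isSetAlgebra_generateSetAlgebra,
    by rw [generateFrom_generateSetAlgebra_eq, generateFrom_countableGeneratingSet]⟩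

section tvDist

variable {γ : Type*} [mγ : MeasurableSpace γ] {μ ν : Measure γ}

theorem tvDist_le {c : ℝ} (h : ∀ s, MeasurableSet s → |μ.real s - ν.real s| ≤ c) :
    tvDist μ ν ≤ c :=
  have : Nonempty {s : Set γ // MeasurableSet s} := ⟨⟨∅, .empty⟩⟩
  ciSup_le fun s => h s.1 s.2

variable [IsFiniteMeasure μ] [IsFiniteMeasure ν]

theorem abs_measureReal_sub_le_tvDist {s : Set γ} (hs : MeasurableSet s) :
    |μ.real s - ν.real s| ≤ tvDist μ ν := by
  refine le_ciSup (f := fun s : {s : Set γ // MeasurableSet s} => |μ.real s - ν.real s|)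
    ⟨μ.real .univ + ν.real .univ, ?_⟩ ⟨s, hs⟩
  rintro _ ⟨t, rfl⟩
  calc |μ.real t - ν.real t| ≤ |μ.real t| + |ν.real t| := abs_sub _ _
    _ ≤ μ.real .univ + ν.real .univ := by
      simp only [abs_of_nonneg measureReal_nonneg]
      exact add_le_add (measureReal_mono (Set.subset_univ _))
        (measureReal_mono (Set.subset_univ _))

theorem tvDist_nonneg : 0 ≤ tvDist μ ν :=
  (abs_nonneg _).trans (abs_measureReal_sub_le_tvDist (μ := μ) (ν := ν) .empty)

theorem tvDist_le_of_isSetAlgebra {𝒜 : Set (Set γ)} (h𝒜 : IsSetAlgebra 𝒜)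
    (hgen : generateFrom 𝒜 = mγ) {c : ℝ} (h : ∀ A ∈ 𝒜, |μ.real A - ν.real A| ≤ c) :
    tvDist μ ν ≤ c := by
  refine tvDist_le fun s hs => le_of_forall_pos_lt_add fun e he => ?_
  obtain ⟨A, hA, hsA⟩ := (Measure.MeasureDense.of_generateFrom_isSetAlgebra_finite (μ + ν) h𝒜
    hgen.symm).approx s hs (measure_ne_top _ _) e he
  have hAm : MeasurableSet A := hgen ▸ measurableSet_generateFrom hA
  have hsA' : μ.real (symmDiff s A) + ν.real (symmDiff s A) < e := by
    rw [← measureReal_add_apply]; exact ENNReal.toReal_lt_of_lt_ofReal hsA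
  have hμ := abs_measureReal_sub_le_measureReal_symmDiff (μ := μ) hs.nullMeasurableSet
    hAm.nullMeasurableSet
  have hν := abs_measureReal_sub_le_measureReal_symmDiff (μ := ν) hs.nullMeasurableSet
    hAm.nullMeasurableSet
  calc |μ.real s - ν.real s| ≤ |μ.real s - μ.real A| + |μ.real A - ν.real s| := abs_sub_le _ _ _
    _ ≤ |μ.real s - μ.real A| + (|μ.real A - ν.real A| + |ν.real A - ν.real s|) := by
      gcongr; exact abs_sub_le _ _ _
    _ < c + e := by rw [abs_sub_comm (ν.real A)]; linarith [h A hA]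

theorem tvDist_eq_iSup_of_isSetAlgebra {𝒜 : Set (Set γ)} (h𝒜 : IsSetAlgebra 𝒜)
    (hgen : generateFrom 𝒜 = mγ) : tvDist μ ν = ⨆ A : 𝒜, |μ.real A - ν.real A| := by
  have : Nonempty 𝒜 := ⟨⟨∅, h𝒜.empty_mem⟩⟩
  refine le_antisymm (tvDist_le_of_isSetAlgebra h𝒜 hgen fun A hA => ?_)
    (ciSup_le fun A => abs_measureReal_sub_le_tvDist (hgen ▸ measurableSet_generateFrom A.2))
  exact le_ciSup (f := fun A : 𝒜 => |μ.real A - ν.real A|)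
    ⟨tvDist μ ν, by
      rintro _ ⟨A, rfl⟩
      exact abs_measureReal_sub_le_tvDist (hgen ▸ measurableSet_generateFrom A.2)⟩ ⟨A, hA⟩

end tvDist

theorem tvDist_le_one {γ : Type*} [MeasurableSpace γ] (μ ν : Measure γ) [IsProbabilityMeasure μ]
    [IsProbabilityMeasure ν] : tvDist μ ν ≤ 1 :=
  tvDist_le fun s _ => abs_sub_le_iff.2
    ⟨by linarith [measureReal_le_one (μ := μ) (s := s), measureReal_nonneg (μ := ν) (s := s)],
     by linarith [measureReal_le_one (μ := ν) (s := s), measureReal_nonneg (μ := μ) (s := s)]⟩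

theorem ProbabilityTheory.Kernel.measurable_tvDist {β γ : Type*} [MeasurableSpace β]
    [MeasurableSpace γ] [CountablyGenerated γ] (κ η : Kernel β γ) [IsFiniteKernel κ]
    [IsFiniteKernel η] : Measurable fun b => tvDist (κ b) (η b) := by
  obtain ⟨𝒜, h𝒜c, h𝒜, hgen⟩ := exists_countable_isSetAlgebra_generateFrom_eq γ
  have : Countable 𝒜 := h𝒜c.to_subtype
  simp_rw [tvDist_eq_iSup_of_isSetAlgebra h𝒜 hgen]
  refine Measurable.iSup fun A => ?_
  have hA : MeasurableSet A.1 := hgen ▸ measurableSet_generateFrom A.2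
  exact ((κ.measurable_coe hA).ennreal_toReal.sub (η.measurable_coe hA).ennreal_toReal).abs

theorem ProbabilityTheory.Kernel.integrable_tvDist_comp {Ω β γ : Type*} {mΩ : MeasurableSpace Ω}
    {μ : Measure Ω} [IsFiniteMeasure μ] [MeasurableSpace β] [MeasurableSpace γ]
    [CountablyGenerated γ] (κ η : Kernel β γ) [IsMarkovKernel κ] [IsMarkovKernel η] {T : Ω → β}
    (hT : Measurable T) : Integrable (fun ω => tvDist (κ (T ω)) (η (T ω))) μ :=
  .of_bound ((κ.measurable_tvDist η).comp hT).aestronglyMeasurable 1 <| .of_forall fun _ => by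
    rw [Real.norm_of_nonneg tvDist_nonneg]; exact tvDist_le_one _ _

section condDistrib

variable {Ω α β γ : Type*} {mΩ : MeasurableSpace Ω} {μ : Measure Ω} [IsFiniteMeasure μ]
  {mα : MeasurableSpace α} {mβ : MeasurableSpace β}
  [MeasurableSpace γ] [StandardBorelSpace γ] [Nonempty γ] {Y : Ω → α} {T : Ω → β}

theorem condDistrib_real_ae_eq_condExp_condDistrib_real {X : Ω → γ} (hX : Measurable X)
    (hY : Measurable Y) (hT : Measurable T) (hYT : mα.comap Y ≤ mβ.comap T) {s : Set γ}
    (hs : MeasurableSet s) :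
    (fun ω => (condDistrib X Y μ (Y ω)).real s) =ᵐ[μ]
      μ[fun ω => (condDistrib X T μ (T ω)).real s | mα.comap Y] :=
  (condDistrib_ae_eq_condExp hY hX hs).trans <|
    (condExp_condExp_of_le hYT hT.comap_le).symm.trans
      (condExp_congr_ae (condDistrib_ae_eq_condExp hT hX hs)).symm

theorem ae_tvDist_condDistrib_le_condExp_tvDist {X₁ X₂ : Ω → γ} (hX₁ : Measurable X₁)
    (hX₂ : Measurable X₂) (hY : Measurable Y) (hT : Measurable T)
    (hYT : mα.comap Y ≤ mβ.comap T) :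
    ∀ᵐ ω ∂μ, tvDist (condDistrib X₁ Y μ (Y ω)) (condDistrib X₂ Y μ (Y ω)) ≤
      μ[fun ω => tvDist (condDistrib X₁ T μ (T ω)) (condDistrib X₂ T μ (T ω)) | mα.comap Y] ω := by
  obtain ⟨𝒜, h𝒜c, h𝒜, hgen⟩ := exists_countable_isSetAlgebra_generateFrom_eq γ
  have : Countable 𝒜 := h𝒜c.to_subtype
  set F := fun ω => tvDist (condDistrib X₁ T μ (T ω)) (condDistrib X₂ T μ (T ω))
  have hF : Integrable F μ := Kernel.integrable_tvDist_comp _ _ hT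
  have hset : ∀ A : 𝒜, ∀ᵐ ω ∂μ, |(condDistrib X₁ Y μ (Y ω)).real A -
      (condDistrib X₂ Y μ (Y ω)).real A| ≤ μ[F | mα.comap Y] ω := by
    rintro ⟨A, hA⟩
    have hAm : MeasurableSet A := hgen ▸ measurableSet_generateFrom hA
    set u₁ := fun ω => (condDistrib X₁ T μ (T ω)).real A
    set u₂ := fun ω => (condDistrib X₂ T μ (T ω)).real A
    have hu₁ : Integrable u₁ μ := integrable_toReal_condDistrib hT.aemeasurable hAm
    have hu₂ : Integrable u₂ μ := integrable_toReal_condDistrib hT.aemeasurable hAm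
    have hle : μ[(|u₁ - u₂|) | mα.comap Y] ≤ᵐ[μ] μ[F | mα.comap Y] :=
      condExp_mono (hu₁.sub hu₂).abs hF <| .of_forall fun _ => abs_measureReal_sub_le_tvDist hAm
    filter_upwards [condDistrib_real_ae_eq_condExp_condDistrib_real hX₁ hY hT hYT hAm,
      condDistrib_real_ae_eq_condExp_condDistrib_real hX₂ hY hT hYT hAm,
      condExp_sub hu₁ hu₂ (mα.comap Y), abs_condExp_ae_le_condExp_abs (m := mα.comap Y) (u₁ - u₂),
      hle] with ω h₁ h₂ hsub habs hle
    rw [h₁, h₂, ← Pi.sub_apply, ← hsub]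
    exact habs.trans hle
  filter_upwards [ae_all_iff.2 hset] with ω hω
  exact tvDist_le_of_isSetAlgebra h𝒜 hgen fun A hA => hω ⟨A, hA⟩

end condDistrib

section condExp

variable {Ω : Type*} {m mΩ : MeasurableSpace Ω} {μ : Measure Ω} [IsFiniteMeasure μ]

theorem mul_measureReal_le_condExp_indicator_le (hm : m ≤ mΩ) {s : Set Ω} (hs : MeasurableSet s)
    (ε : ℝ) : ε * μ.real {ω | ε ≤ μ[s.indicator 1 | m] ω} ≤ μ.real s :=
  calc _ ≤ ∫ ω, μ[s.indicator 1 | m] ω ∂μ :=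
        mul_meas_ge_le_integral_of_nonneg
          (condExp_nonneg (.of_forall (Set.indicator_nonneg fun _ _ => zero_le_one)))
          integrable_condExp ε
    _ = μ.real s := by rw [integral_condExp hm, integral_indicator_one hs]

theorem measureReal_compl_condExp_le_two_mul_le (hm : m ≤ mΩ) {F : Ω → ℝ} (hF : Measurable F)
    (hF_int : Integrable F μ) (hF_le : ∀ ω, F ω ≤ 1) {ε δ : ℝ} (hε : 0 < ε)
    (hδ : μ.real {ω | F ω ≤ ε}ᶜ ≤ δ) : μ.real {ω | μ[F | m] ω ≤ 2 * ε}ᶜ ≤ δ / ε := by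
  set B := {ω | F ω ≤ ε}ᶜ
  have hB : MeasurableSet B := (measurableSet_le hF measurable_const).compl
  have hB_int : Integrable (B.indicator (1 : Ω → ℝ)) μ := (integrable_const 1).indicator hB
  have hF_le_add : F ≤ (fun _ => ε) + B.indicator (1 : Ω → ℝ) := fun ω => by
    by_cases hω : ω ∈ B
    · simp only [Pi.add_apply, Set.indicator_of_mem hω, Pi.one_apply]; linarith [hF_le ω]
    · simpa [Set.indicator_of_notMem hω, B] using hω
  have hcond : ∀ᵐ ω ∂μ, μ[F | m] ω ≤ ε + μ[B.indicator (1 : Ω → ℝ) | m] ω := by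
    filter_upwards [condExp_mono hF_int ((integrable_const ε).add hB_int) (.of_forall hF_le_add),
      condExp_add (integrable_const ε) hB_int m] with ω hle hadd
    rwa [hadd, condExp_const hm] at hle
  calc μ.real {ω | μ[F | m] ω ≤ 2 * ε}ᶜ ≤ μ.real {ω | ε ≤ μ[B.indicator (1 : Ω → ℝ) | m] ω} :=
        ENNReal.toReal_mono (measure_ne_top _ _) <| measure_mono_ae <| hcond.mono
          fun ω h (hω : ¬μ[F | m] ω ≤ 2 * ε) => show ε ≤ _ by linarith [not_le.1 hω]
    _ ≤ μ.real B / ε := by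
      rw [le_div_iff₀ hε, mul_comm]; exact mul_measureReal_le_condExp_indicator_le hm hB ε
    _ ≤ δ / ε := by gcongr

end condExp

theorem ofReal_one_sub_le_iff_measureReal_compl_le {Ω : Type*} {mΩ : MeasurableSpace Ω}
    {μ : Measure Ω} [IsProbabilityMeasure μ] {s : Set Ω} (hs : MeasurableSet s) (δ : ℝ) :
    ENNReal.ofReal (1 - δ) ≤ μ s ↔ μ.real sᶜ ≤ δ := by
  rw [ENNReal.ofReal_le_iff_le_toReal (measure_ne_top μ s), ← measureReal_def,
    probReal_compl_eq_one_sub hs]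
  constructor <;> intro <;> linarith

theorem tv_conditioning_reduction_general
    {Ω α β γ : Type*} [MeasureSpace Ω] [IsProbabilityMeasure (ℙ : Measure Ω)]
    [MeasurableSpace α] [MeasurableSpace β]
    [MeasurableSpace γ] [StandardBorelSpace γ] [Nonempty γ]
    (S₁ S₂ : Ω → γ) (Y' : Ω → β) (Y : Ω → α)
    (hS₁ : Measurable S₁) (hS₂ : Measurable S₂)
    (hY' : Measurable Y') (hY : Measurable Y)
    (ε δ : ℝ) (hε : 0 < ε)
    (h : ENNReal.ofReal (1 - δ) ≤
      ℙ {ω | tvDist ((condDistrib S₁ (fun ω' => (Y' ω', Y ω')) ℙ) (Y' ω, Y ω))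
               ((condDistrib S₂ (fun ω' => (Y' ω', Y ω')) ℙ) (Y' ω, Y ω)) ≤ ε}) :
    ENNReal.ofReal (1 - δ / ε) ≤
      ℙ {ω | tvDist ((condDistrib S₁ Y ℙ) (Y ω)) ((condDistrib S₂ Y ℙ) (Y ω)) ≤ 2 * ε} := by
  set T : Ω → β × α := fun ω => (Y' ω, Y ω)
  have hT : Measurable T := hY'.prodMk hY
  have hYT : MeasurableSpace.comap Y inferInstance ≤ MeasurableSpace.comap T inferInstance := by
    rw [show Y = Prod.snd ∘ T from rfl, ← MeasurableSpace.comap_comp]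
    exact MeasurableSpace.comap_mono measurable_snd.comap_le
  set F := fun ω => tvDist (condDistrib S₁ T ℙ (T ω)) (condDistrib S₂ T ℙ (T ω))
  have hF : Measurable F := (Kernel.measurable_tvDist _ _).comp hT
  have hcond := measureReal_compl_condExp_le_two_mul_le hY.comap_le hF
    (Kernel.integrable_tvDist_comp _ _ hT) (fun ω => tvDist_le_one _ _) hε
    ((ofReal_one_sub_le_iff_measureReal_compl_le (measurableSet_le hF measurable_const) δ).1 h)
  rw [← ofReal_one_sub_le_iff_measureReal_compl_le
    (measurableSet_le (stronglyMeasurable_condExp.mono hY.comap_le).measurable measurable_const)]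
    at hcond
  exact hcond.trans <| measure_mono_ae <|
    (ae_tvDist_condDistrib_le_condExp_tvDist hS₁ hS₂ hY hT hYT).mono fun ω h hω => h.trans hω

/-- If, with probability at least `1 − δ` over `(Y', Y)`, the conditional
laws of `S₁` and `S₂` given `(Y', Y)` are within total variation `ε`, then with probability
at least `1 − δ/ε` over `Y`, the conditional laws of `S₁` and `S₂` given `Y` alone are
within total variation `2ε`. -/
theorem tv_conditioning_reduction
    {Ω α β γ : Type*} [MeasureSpace Ω] [IsProbabilityMeasure (ℙ : Measure Ω)]
    [MeasurableSpace α] [MeasurableSpace β]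
    [MeasurableSpace γ] [StandardBorelSpace γ] [Nonempty γ]
    (S₁ S₂ : Ω → γ) (Y' : Ω → β) (Y : Ω → α)
    (hS₁ : Measurable S₁) (hS₂ : Measurable S₂)
    (hY' : Measurable Y') (hY : Measurable Y)
    (ε δ : ℝ) (hε : 0 < ε) (hδ : 0 < δ)
    (h : ENNReal.ofReal (1 - δ) ≤
      ℙ {ω | tvDist ((condDistrib S₁ (fun ω' => (Y' ω', Y ω')) ℙ) (Y' ω, Y ω))
               ((condDistrib S₂ (fun ω' => (Y' ω', Y ω')) ℙ) (Y' ω, Y ω)) ≤ ε}) :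
    ENNReal.ofReal (1 - δ / ε) ≤
      ℙ {ω | tvDist ((condDistrib S₁ Y ℙ) (Y ω)) ((condDistrib S₂ Y ℙ) (Y ω)) ≤ 2 * ε} :=
  tv_conditioning_reduction_general S₁ S₂ Y' Y hS₁ hS₂ hY' hY ε δ hε h
end

section
/- Let p be a probability density on ℝ^d, let α > 0, 0 < r < R, and θ ∈ ℝ^d. Assume p is positive and twice continuously differentiable on the ball B(θ, R), that P_{x∼p}[x ∈ B(θ, r)] ≥ 0.9, and that ∇²(−log p)(x) ⪰ α I_d for all x ∈ B(θ, R). If R > 4dr, then there exists θ' ∈ B(θ, 4dr) with ∇ log p(θ') = 0. -/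
/-!
Minimise the convex function `-log p` over `B(θ, 4dr)`, at `θ'` say. If `θ'` lay on the boundary
sphere, then `p` would not decrease along segments issuing from `θ'`, so the homothety `T` of
centre `θ'` and ratio `t = 1 - 1/(2d)` satisfies `p ≤ p ∘ T` on `B(θ, r)`. Changing variables,
`T(B(θ, r))` carries mass at least `t^d · 0.9 ≥ 0.45`; it is disjoint from `B(θ, r)` because `T`
moves `θ` by `(1 - t) · 4dr = 2r`, so the total mass would exceed `1`. Hence `θ'` is an interior
minimum, i.e. a stationary point of `log p`.
-/

open MeasureTheory Metric Set Topology Module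
open scoped Pointwise

section Convexity

variable {E : Type*} [NormedAddCommGroup E] [NormedSpace ℝ E] {s : Set E} {f : E → ℝ}

theorem convexOn_of_fderiv_fderiv_nonneg (hs : Convex ℝ s) (hs_open : IsOpen s)
    (hf : ContDiffOn ℝ 2 f s) (hf₂ : ∀ x ∈ s, ∀ v, 0 ≤ fderiv ℝ (fderiv ℝ f) x v v) :
    ConvexOn ℝ s f := by
  refine ⟨hs, fun x hx y hy a b ha hb hab => ?_⟩
  have hseg : ∀ t ∈ Icc (0 : ℝ) 1, AffineMap.lineMap x y t ∈ s := fun t ht =>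
    hs.lineMap_mem hx hy ht
  have hC2 : ∀ t ∈ Icc (0 : ℝ) 1, ContDiffAt ℝ 2 f (AffineMap.lineMap x y t) := fun t ht =>
    hf.contDiffAt (hs_open.mem_nhds (hseg t ht))
  have hderiv : ∀ t ∈ Icc (0 : ℝ) 1, HasDerivAt (fun t => f (AffineMap.lineMap x y t))
      (fderiv ℝ f (AffineMap.lineMap x y t) (y - x)) t := fun t ht =>
    ((hC2 t ht).differentiableAt two_ne_zero).hasFDerivAt.comp_hasDerivAt t
      AffineMap.hasDerivAt_lineMap
  have hderiv₂ : ∀ t ∈ Icc (0 : ℝ) 1,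
      HasDerivAt (fun t => fderiv ℝ f (AffineMap.lineMap x y t) (y - x))
        (fderiv ℝ (fderiv ℝ f) (AffineMap.lineMap x y t) (y - x) (y - x)) t := fun t ht =>
    by simpa using ((((hC2 t ht).fderiv_right le_rfl).differentiableAt one_ne_zero
      ).hasFDerivAt.comp_hasDerivAt t AffineMap.hasDerivAt_lineMap).clm_apply
        (hasDerivAt_const t (y - x))
  have hline : ConvexOn ℝ (Icc (0 : ℝ) 1) fun t => f (AffineMap.lineMap x y t) := by
    refine convexOn_of_hasDerivWithinAt2_nonneg (convex_Icc 0 1)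
      (fun t ht => (hderiv t ht).continuousAt.continuousWithinAt)
      (fun t ht => (hderiv t (interior_subset ht)).hasDerivWithinAt)
      (fun t ht => (hderiv₂ t (interior_subset ht)).hasDerivWithinAt)
      (fun t ht => hf₂ _ (hseg t (interior_subset ht)) _)
  have := hline.2 (left_mem_Icc.2 zero_le_one) (right_mem_Icc.2 zero_le_one) ha hb hab
  rw [eq_sub_of_add_eq hab] at this ⊢
  simpa [AffineMap.lineMap_apply_module] using this

theorem ConvexOn.apply_homothety_le_of_isMinOn (hf : ConvexOn ℝ s f) {x₀ x : E}
    (hmin : IsMinOn f s x₀) (hx₀ : x₀ ∈ s) (hx : x ∈ s) {t : ℝ} (ht₀ : 0 ≤ t) (ht₁ : t ≤ 1) :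
    f (AffineMap.homothety x₀ t x) ≤ f x := by
  have hconv := hf.2 hx₀ hx (sub_nonneg.2 ht₁) ht₀ (sub_add_cancel 1 t)
  rw [AffineMap.homothety_eq_lineMap, AffineMap.lineMap_apply_module]
  rw [smul_eq_mul, smul_eq_mul] at hconv
  nlinarith [mul_le_mul_of_nonneg_left (hmin hx) (sub_nonneg.2 ht₁)]

end Convexity

theorem iteratedFDerivWithin_two_apply_of_mem_nhds {E F : Type*} [NormedAddCommGroup E]
    [NormedSpace ℝ E] [NormedAddCommGroup F] [NormedSpace ℝ F] {f : E → F} {s : Set E} {x : E}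
    (hs : s ∈ 𝓝 x) (m : Fin 2 → E) :
    iteratedFDerivWithin ℝ 2 f s x m = fderiv ℝ (fderiv ℝ f) x (m 0) (m 1) := by
  rw [iteratedFDerivWithin_congr_set (Filter.eventuallyEq_univ.2 hs), iteratedFDerivWithin_univ,
    iteratedFDeriv_two_apply]

theorem one_half_le_one_sub_inv_two_mul_pow (d : ℕ) : (1 / 2 : ℝ) ≤ (1 - (2 * d : ℝ)⁻¹) ^ d := by
  rcases Nat.eq_zero_or_pos d with rfl | hd
  · norm_num
  have hd' : (1 : ℝ) ≤ d := by exact_mod_cast hd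
  have hinv : (2 * d : ℝ)⁻¹ ≤ 1 := inv_le_one_of_one_le₀ (by linarith)
  calc (1 / 2 : ℝ) = 1 + d * -(2 * d : ℝ)⁻¹ := by field_simp; ring
    _ ≤ (1 + -(2 * d : ℝ)⁻¹) ^ d := one_add_mul_le_pow (by linarith) d
    _ = _ := by rw [← sub_eq_add_neg]

section Homothety

variable {E : Type*} [NormedAddCommGroup E] [NormedSpace ℝ E]

theorem homothety_eq_smul_add (c : E) (t : ℝ) (x : E) :
    AffineMap.homothety c t x = t • x + (c - t • c) := by
  rw [AffineMap.homothety_apply, vsub_eq_sub, vadd_eq_add, smul_sub]; abel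

theorem dist_homothety_homothety (c : E) (t : ℝ) (x y : E) :
    dist (AffineMap.homothety c t x) (AffineMap.homothety c t y) = |t| * dist x y := by
  rw [dist_eq_norm, dist_eq_norm, homothety_eq_smul_add, homothety_eq_smul_add,
    add_sub_add_right_eq_sub, ← smul_sub, norm_smul, Real.norm_eq_abs]

variable [MeasurableSpace E] [BorelSpace E] [FiniteDimensional ℝ E] (μ : Measure E)
  [μ.IsAddHaarMeasure]

theorem MeasureTheory.Integrable.comp_homothety {p : E → ℝ} (hp : Integrable p μ) (c : E)
    {t : ℝ} (ht : t ≠ 0) :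
    Integrable (fun x => p (AffineMap.homothety c t x)) μ := by
  simp_rw [homothety_eq_smul_add]
  exact (hp.comp_add_right (c - t • c)).comp_smul ht

theorem setIntegral_comp_homothety (p : E → ℝ) (s : Set E) (c : E) {t : ℝ} (ht : 0 < t) :
    ∫ x in s, p (AffineMap.homothety c t x) ∂μ =
      (t ^ finrank ℝ E)⁻¹ * ∫ y in AffineMap.homothety c t '' s, p y ∂μ := by
  have himage : AffineMap.homothety c t '' s = (· + (c - t • c)) '' (t • s) := by
    rw [← image_smul, image_image]
    simp_rw [homothety_eq_smul_add]
  simp_rw [himage, (measurePreserving_add_right μ (c - t • c)).setIntegral_image_emb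
      (measurableEmbedding_addRight _), homothety_eq_smul_add]
  exact Measure.setIntegral_comp_smul_of_pos μ (fun y => p (y + (c - t • c))) s ht

theorem one_add_pow_mul_setIntegral_closedBall_le_integral {p : E → ℝ} (hp_nonneg : 0 ≤ p)
    (hp : Integrable p μ) {θ c : E} {r t : ℝ} (ht : 0 < t)
    (hsep : r + t * r < (1 - t) * dist c θ)
    (hle : ∀ x ∈ closedBall θ r, p x ≤ p (AffineMap.homothety c t x)) :
    (1 + t ^ finrank ℝ E) * ∫ x in closedBall θ r, p x ∂μ ≤ ∫ x, p x ∂μ := by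
  set T := AffineMap.homothety c t
  have hdisj : Disjoint (closedBall θ r) (T '' closedBall θ r) := by
    refine disjoint_left.2 fun x hx ⟨z, hz, hzx⟩ => ?_
    have hTθ : (1 - t) * dist c θ ≤ dist (T θ) θ := by
      rw [dist_homothety_self, Real.norm_eq_abs]
      exact mul_le_mul_of_nonneg_right (le_abs_self _) dist_nonneg
    have hTz : dist (T z) (T θ) = t * dist z θ := by
      rw [dist_homothety_homothety, abs_of_pos ht]
    have := dist_triangle (T θ) (T z) θ
    rw [mem_closedBall] at hx hz
    subst hzx
    nlinarith [dist_comm (T z) (T θ)]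
  have hmeas : MeasurableSet (T '' closedBall θ r) :=
    ((isCompact_closedBall θ r).image (AffineMap.homothety_continuous c t)).isClosed.measurableSet
  have himage : t ^ finrank ℝ E * ∫ x in closedBall θ r, p x ∂μ ≤
      ∫ y in T '' closedBall θ r, p y ∂μ := by
    have hpow : 0 < t ^ finrank ℝ E := pow_pos ht _
    calc t ^ finrank ℝ E * ∫ x in closedBall θ r, p x ∂μ
        ≤ t ^ finrank ℝ E * ∫ x in closedBall θ r, p (T x) ∂μ := by
          refine mul_le_mul_of_nonneg_left ?_ hpow.le
          exact setIntegral_mono_on hp.integrableOn (hp.comp_homothety μ c ht.ne').integrableOn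
            measurableSet_closedBall hle
      _ = ∫ y in T '' closedBall θ r, p y ∂μ := by
          rw [setIntegral_comp_homothety μ p _ c ht, mul_inv_cancel_left₀ hpow.ne']
  calc (1 + t ^ finrank ℝ E) * ∫ x in closedBall θ r, p x ∂μ
      ≤ (∫ x in closedBall θ r, p x ∂μ) + ∫ y in T '' closedBall θ r, p y ∂μ := by linarith
    _ = ∫ x in closedBall θ r ∪ T '' closedBall θ r, p x ∂μ :=
        (setIntegral_union hdisj hmeas hp.integrableOn hp.integrableOn).symm
    _ ≤ ∫ x, p x ∂μ := setIntegral_le_integral hp (Filter.Eventually.of_forall hp_nonneg)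

theorem IsMinOn.mem_ball_of_convexOn_neg_log {p : E → ℝ} (hp_nonneg : 0 ≤ p)
    (hp : Integrable p μ) {θ θ' : E} {r ρ : ℝ} (hr : 0 < r) (hE : 0 < finrank ℝ E)
    (hρ : 4 * finrank ℝ E * r ≤ ρ)
    (hpos : ∀ x ∈ closedBall θ ρ, 0 < p x)
    (hconv : ConvexOn ℝ (closedBall θ ρ) fun x => -Real.log (p x))
    (hmin : IsMinOn (fun x => -Real.log (p x)) (closedBall θ ρ) θ') (hθ' : θ' ∈ closedBall θ ρ)
    (hmass : 2 / 3 * ∫ x, p x ∂μ < ∫ x in closedBall θ r, p x ∂μ) :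
    θ' ∈ ball θ ρ := by
  by_contra hθ'_ball
  have hdist : dist θ' θ = ρ := le_antisymm hθ' (not_lt.1 hθ'_ball)
  have hd : (1 : ℝ) ≤ finrank ℝ E := by exact_mod_cast hE
  set t : ℝ := 1 - (2 * finrank ℝ E : ℝ)⁻¹
  have ht₀ : 0 < t := by
    have : (2 * finrank ℝ E : ℝ)⁻¹ ≤ 2⁻¹ := inv_anti₀ two_pos (by linarith)
    linarith
  have ht₁ : t < 1 := sub_lt_self 1 (by positivity)
  have hle : ∀ x ∈ closedBall θ r, p x ≤ p (AffineMap.homothety θ' t x) := by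
    intro x hx
    have hx' : x ∈ closedBall θ ρ := closedBall_subset_closedBall (by nlinarith) hx
    have hTx : AffineMap.homothety θ' t x ∈ closedBall θ ρ := by
      rw [AffineMap.homothety_eq_lineMap]
      exact (convex_closedBall θ ρ).lineMap_mem hθ' hx' ⟨ht₀.le, ht₁.le⟩
    have := hconv.apply_homothety_le_of_isMinOn hmin hθ' hx' ht₀.le ht₁.le
    rw [← Real.log_le_log_iff (hpos x hx') (hpos _ hTx)]
    linarith
  -- `1 - t = (2d)⁻¹` and `ρ ≥ 4dr`, so the homothety moves the centre `θ` by at least `2r`.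
  have hsep : r + t * r < (1 - t) * dist θ' θ := by
    have h2r : 2 * r ≤ (1 - t) * dist θ' θ := by
      rw [hdist, sub_sub_cancel, ← div_eq_inv_mul, le_div_iff₀ (by positivity)]
      linarith
    nlinarith
  have hdouble := one_add_pow_mul_setIntegral_closedBall_le_integral μ hp_nonneg hp ht₀ hsep hle
  have hpow := one_half_le_one_sub_inv_two_mul_pow (finrank ℝ E)
  have hball_nonneg : 0 ≤ ∫ x in closedBall θ r, p x ∂μ :=
    setIntegral_nonneg measurableSet_closedBall fun x _ => hp_nonneg x
  nlinarith

end Homothety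

theorem exists_stationary_point_near_mass_general (d : ℕ) (α r R : ℝ)
    (hα : 0 < α) (hr : 0 < r)
    (θ : EuclideanSpace ℝ (Fin d))
    (p : EuclideanSpace ℝ (Fin d) → ℝ)
    (hpnn : ∀ x, 0 ≤ p x) (hpint : (∫ x, p x) = 1)
    (hppos : ∀ x ∈ closedBall θ R, 0 < p x)
    (hpC2 : ContDiffOn ℝ 2 p (closedBall θ R))
    (hhess : ∀ x ∈ closedBall θ R, ∀ v : EuclideanSpace ℝ (Fin d),
      α * ‖v‖ ^ 2 ≤
        (iteratedFDerivWithin ℝ 2 (fun y => -Real.log (p y)) (closedBall θ R) x) ![v, v])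
    (hmass : (0.9 : ℝ) ≤ ∫ x in closedBall θ r, p x)
    (hR : 4 * d * r < R) :
    ∃ θ' ∈ closedBall θ (4 * d * r),
      HasGradientAt (fun y => Real.log (p y)) 0 θ' := by
  rcases Nat.eq_zero_or_pos d with rfl | hd
  · exact ⟨θ, mem_closedBall_self (by simp),
      by simpa using (hasFDerivAt_of_subsingleton (fun y => Real.log (p y)) θ).hasGradientAt⟩
  have hball : closedBall θ (4 * d * r) ⊆ ball θ R := closedBall_subset_ball hR
  have hlog : ContDiffOn ℝ 2 (fun y => Real.log (p y)) (ball θ R) :=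
    (hpC2.mono ball_subset_closedBall).log fun x hx => (hppos x (ball_subset_closedBall hx)).ne'
  have hconv : ConvexOn ℝ (closedBall θ (4 * d * r)) fun y => -Real.log (p y) := by
    refine (convexOn_of_fderiv_fderiv_nonneg (convex_ball θ R) isOpen_ball hlog.neg
      fun x hx v => ?_).subset hball (convex_closedBall _ _)
    have := hhess x (ball_subset_closedBall hx) v
    rw [iteratedFDerivWithin_two_apply_of_mem_nhds (closedBall_mem_nhds_of_mem hx)] at this
    exact (by positivity : 0 ≤ α * ‖v‖ ^ 2).trans this
  obtain ⟨θ', hθ', hmin⟩ := (isCompact_closedBall θ (4 * d * r)).exists_isMinOn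
    ⟨θ, mem_closedBall_self (by positivity)⟩ (hlog.neg.continuousOn.mono hball)
  have hp : Integrable p := by
    by_contra h
    simp [integral_undef h] at hpint
  have hθ'_ball : θ' ∈ ball θ (4 * d * r) :=
    hmin.mem_ball_of_convexOn_neg_log volume hpnn hp hr (by simpa) (by simp)
      (fun x hx => hppos x (ball_subset_closedBall (hball hx))) hconv hθ'
      (by rw [hpint]; linarith)
  have hmax : IsLocalMax (fun y => Real.log (p y)) θ' := by
    simpa using (hmin.isLocalMin (closedBall_mem_nhds_of_mem hθ'_ball)).neg
  have hdiff := (hlog.contDiffAt (isOpen_ball.mem_nhds (hball hθ'))).differentiableAt two_ne_zero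
  exact ⟨θ', hθ', by simpa [gradient, hmax.fderiv_eq_zero] using hdiff.hasGradientAt⟩

/-- Let `p` be a probability density on `ℝ^d`, positive and `C²` on
`B(θ, R)`, with at least `0.9` mass in `B(θ, r)` and `∇²(−log p) ⪰ α I_d` on `B(θ, R)`.
If `R > 4dr`, then `log p` has a stationary point `θ'` in `B(θ, 4dr)`. -/
theorem exists_stationary_point_near_mass (d : ℕ) (α r R : ℝ)
    (hα : 0 < α) (hr : 0 < r) (hrR : r < R)
    (θ : EuclideanSpace ℝ (Fin d))
    (p : EuclideanSpace ℝ (Fin d) → ℝ)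
    (hpmeas : Measurable p) (hpnn : ∀ x, 0 ≤ p x) (hpint : (∫ x, p x) = 1)
    (hppos : ∀ x ∈ closedBall θ R, 0 < p x)
    (hpC2 : ContDiffOn ℝ 2 p (closedBall θ R))
    (hhess : ∀ x ∈ closedBall θ R, ∀ v : EuclideanSpace ℝ (Fin d),
      α * ‖v‖ ^ 2 ≤
        (iteratedFDerivWithin ℝ 2 (fun y => -Real.log (p y)) (closedBall θ R) x) ![v, v])
    (hmass : (0.9 : ℝ) ≤ ∫ x in closedBall θ r, p x)
    (hR : 4 * d * r < R) :
    ∃ θ' ∈ closedBall θ (4 * d * r),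
      HasGradientAt (fun y => Real.log (p y)) 0 θ' :=
  exists_stationary_point_near_mass_general d α r R hα hr θ p hpnn hpint hppos hpC2 hhess hmass hR
end
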